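/- Let s = (s₁,s₂,s₃) ∈ ℝ³ with s₁,s₂,s₃ > 0. Then the following are equivalent: (i) p_r(s) > 0 for all r = 1,2,3 and s₁,s₂,s₃ are not all equal; (ii) there exists a = (a₁,a₂,a₃) ∈ ℝ³ such that M₆(s,a) is positive definite, s_{r+1} + s_{r+2} - s_r + a_r > 0 for all r, and a_r < a_r⁰(s) for all r. (This is the matrix-level statement that a homogeneous metric g_s on the complex flag manifold W⁶ = SU(3)/T² has strongly positive curvature if and only if it has sec > 0.) -/

import Mathlib

/-!
At `a = a⁰(s)` the off-diagonal entries of `M₆` are `c_r / s_r` with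
`c_r = (s_{r+1} - s_{r+2})² - s_r (s_{r+1} + s_{r+2})`, and the two nontrivial leading minors of
`M₆(s, a⁰(s))` are positive polynomial consequences of `p_r(s) > 0` (the determinant also needs
the `s_r` not all equal). By continuity `a = a⁰(s) - ε` still works for small `ε > 0`, and
`s_{r+1} + s_{r+2} - s_r + a_r⁰(s) = p_r(s) / (2 s_r)` gives the lower bounds on `a`.
Conversely, the same identity yields `p_r(s) > 0`, and for `s = (t, t, t)` the quadratic form of
`M₆(s, a)` at `(1, 1, 1)` equals `3t + 2(a₁ + a₂ + a₃) < 0`.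
-/

open Matrix

/-- `S(s) = 2(s₁s₂+s₁s₃+s₂s₃) - (s₁²+s₂²+s₃²)`. -/
noncomputable def Spoly (s : Fin 3 → ℝ) : ℝ :=
  2 * (s 0 * s 1 + s 0 * s 2 + s 1 * s 2) - (s 0 ^ 2 + s 1 ^ 2 + s 2 ^ 2)

/-- `p_r(s) = (s_{r+1}-s_{r+2})² + 2 s_r (s_{r+1}+s_{r+2}) - 3 s_r²`, indices mod 3. -/
noncomputable def ppoly (s : Fin 3 → ℝ) (r : Fin 3) : ℝ :=
  (s (r + 1) - s (r + 2)) ^ 2 + 2 * s r * (s (r + 1) + s (r + 2)) - 3 * s r ^ 2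

/-- `a_r⁰(s) = ((s_{r+1}-s_{r+2})² - s_r²)/(2 s_r)`, indices mod 3. -/
noncomputable def a0 (s : Fin 3 → ℝ) (r : Fin 3) : ℝ :=
  ((s (r + 1) - s (r + 2)) ^ 2 - s r ^ 2) / (2 * s r)

/-- First block of the modified curvature operator of `(W⁶, g_s)`. -/
noncomputable def M6 (s a : Fin 3 → ℝ) : Matrix (Fin 3) (Fin 3) ℝ :=
  !![4 * s 0,                         -Spoly s / (2 * s 2) + a 2,  -Spoly s / (2 * s 1) + a 1;
     -Spoly s / (2 * s 2) + a 2,      4 * s 1,                     -Spoly s / (2 * s 0) + a 0;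
     -Spoly s / (2 * s 1) + a 1,      -Spoly s / (2 * s 0) + a 0,  4 * s 2]

open Filter Topology

section SymmetricFinThree

variable (d₁ d₂ d₃ b₁ b₂ b₃ : ℝ)

lemma dotProduct_mulVec_symm_fin_three (x : Fin 3 → ℝ) :
    star x ⬝ᵥ (!![d₁, b₃, b₂; b₃, d₂, b₁; b₂, b₁, d₃] *ᵥ x) =
      d₁ * x 0 ^ 2 + d₂ * x 1 ^ 2 + d₃ * x 2 ^ 2
        + 2 * (b₃ * x 0 * x 1 + b₂ * x 0 * x 2 + b₁ * x 1 * x 2) := by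
  simp only [dotProduct, Pi.star_apply, star_trivial, mulVec, of_apply, cons_val', cons_val_fin_one,
    Fin.sum_univ_three, cons_val_zero, cons_val_one, cons_val]
  ring

variable {d₁ d₂ d₃ b₁ b₂ b₃}

lemma posDef_symm_fin_three_of_minors_pos (h₁ : 0 < d₁) (h₂ : 0 < d₁ * d₂ - b₃ ^ 2)
    (h₃ : 0 < d₁ * d₂ * d₃ + 2 * b₁ * b₂ * b₃ - d₁ * b₁ ^ 2 - d₂ * b₂ ^ 2 - d₃ * b₃ ^ 2) :
    (!![d₁, b₃, b₂; b₃, d₂, b₁; b₂, b₁, d₃]).PosDef := by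
  refine posDef_iff_dotProduct_mulVec.mpr ⟨?_, fun x hx => ?_⟩
  · ext i j
    fin_cases i <;> fin_cases j <;> rfl
  rw [dotProduct_mulVec_symm_fin_three]
  -- `d₁ (d₁d₂ - b₃²) Q = (d₁d₂ - b₃²) L² + M² + d₁ det x₂²` with `L`, `M` the two squares below
  rcases eq_or_ne (x 2) 0 with hz | hz
  · rcases eq_or_ne (x 1) 0 with hy | hy
    · have hx0 : x 0 ≠ 0 := fun h0 => hx (funext fun i => by fin_cases i <;> assumption)
      rw [hy, hz]
      nlinarith [mul_pos h₁ (sq_pos_of_ne_zero hx0)]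
    · rw [hz]
      nlinarith [sq_nonneg (d₁ * x 0 + b₃ * x 1), mul_pos h₂ (sq_pos_of_ne_zero hy)]
  · have hp : 0 < x 2 ^ 2 := by positivity
    nlinarith [sq_nonneg (d₁ * x 0 + b₃ * x 1 + b₂ * x 2),
      sq_nonneg ((d₁ * d₂ - b₃ ^ 2) * x 1 + (d₁ * b₁ - b₂ * b₃) * x 2),
      mul_pos h₁ h₂, mul_pos (mul_pos h₁ h₃) hp, mul_pos h₂ hp, mul_pos h₁ hp]

end SymmetricFinThree

lemma eventually_pos_nhdsGT_zero {f : ℝ → ℝ} (hf : Continuous f) (h₀ : 0 < f 0) :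
    ∀ᶠ ε in 𝓝[>] 0, 0 < f ε :=
  nhdsWithin_le_nhds (continuousAt_const.eventually_lt hf.continuousAt h₀)

section W6

variable {s : Fin 3 → ℝ}

lemma ppoly_div_eq {r : Fin 3} (hr : s r ≠ 0) :
    ppoly s r / (2 * s r) = s (r + 1) + s (r + 2) - s r + a0 s r := by
  unfold ppoly a0
  field_simp
  ring

noncomputable def offDiagNum (s : Fin 3 → ℝ) (r : Fin 3) : ℝ :=
  (s (r + 1) - s (r + 2)) ^ 2 - s r * (s (r + 1) + s (r + 2))

lemma Spoly_eq_rotate (s : Fin 3 → ℝ) (r : Fin 3) :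
    Spoly s = 2 * (s r * s (r + 1) + s r * s (r + 2) + s (r + 1) * s (r + 2))
      - (s r ^ 2 + s (r + 1) ^ 2 + s (r + 2) ^ 2) := by
  fin_cases r <;> simp only [Spoly, Fin.reduceAdd, Fin.zero_eta, Fin.mk_one, Fin.reduceFinMk] <;>
    ring

lemma neg_Spoly_div_add_a0 {r : Fin 3} (hr : s r ≠ 0) :
    -Spoly s / (2 * s r) + a0 s r = offDiagNum s r / s r := by
  rw [Spoly_eq_rotate s r]
  unfold a0 offDiagNum
  field_simp
  ring

lemma M6_a0_sub (hs : ∀ r, s r ≠ 0) (ε : ℝ) :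
    M6 s (fun r => a0 s r - ε) =
      !![4 * s 0, offDiagNum s 2 / s 2 - ε, offDiagNum s 1 / s 1 - ε;
         offDiagNum s 2 / s 2 - ε, 4 * s 1, offDiagNum s 0 / s 0 - ε;
         offDiagNum s 1 / s 1 - ε, offDiagNum s 0 / s 0 - ε, 4 * s 2] := by
  simp only [M6, ← neg_Spoly_div_add_a0 (hs _), add_sub_assoc]

lemma sq_offDiagNum_lt (hp : ∀ r, 0 < ppoly s r) :
    offDiagNum s 2 ^ 2 < 16 * s 0 * s 1 * s 2 ^ 2 := by
  have h₀ := hp 0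
  have h₁ := hp 1
  have h₂ := hp 2
  simp only [ppoly, offDiagNum, Fin.reduceAdd] at h₀ h₁ h₂ ⊢
  nlinarith [mul_pos h₀ h₁]

lemma offDiagNum_det_pos (hs : ∀ r, 0 < s r) (hp : ∀ r, 0 < ppoly s r)
    (hne : ¬(s 0 = s 1 ∧ s 1 = s 2)) :
    0 < 32 * (s 0 * s 1 * s 2) ^ 2
      - 2 * (offDiagNum s 0 ^ 2 * s 1 * s 2 + offDiagNum s 1 ^ 2 * s 0 * s 2
        + offDiagNum s 2 ^ 2 * s 0 * s 1)
      + offDiagNum s 0 * offDiagNum s 1 * offDiagNum s 2 := by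
  have h₀ := hp 0
  have h₁ := hp 1
  have h₂ := hp 2
  have hF : 0 < (s 0 - s 1) ^ 2 + (s 1 - s 2) ^ 2 + (s 2 - s 0) ^ 2 := by
    rcases not_and_or.mp hne with h | h
    · nlinarith [sq_pos_of_ne_zero (sub_ne_zero.mpr h), sq_nonneg (s 1 - s 2), sq_nonneg (s 2 - s 0)]
    · nlinarith [sq_pos_of_ne_zero (sub_ne_zero.mpr h), sq_nonneg (s 0 - s 1), sq_nonneg (s 2 - s 0)]
  simp only [ppoly, offDiagNum, Fin.reduceAdd] at h₀ h₁ h₂ ⊢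
  nlinarith [mul_pos h₀ h₁, mul_pos h₁ h₂, mul_pos h₀ h₂, mul_pos (mul_pos h₀ (hs 1)) (hs 2),
    mul_pos (mul_pos h₁ (hs 0)) (hs 2), mul_pos (mul_pos h₂ (hs 0)) (hs 1)]

lemma exists_a_of_ppoly_pos (hs : ∀ r, 0 < s r) (hp : ∀ r, 0 < ppoly s r)
    (hne : ¬(s 0 = s 1 ∧ s 1 = s 2)) :
    ∃ a : Fin 3 → ℝ, (M6 s a).PosDef ∧
      (∀ r, 0 < s (r + 1) + s (r + 2) - s r + a r) ∧ (∀ r, a r < a0 s r) := by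
  set u : Fin 3 → ℝ := fun r => offDiagNum s r / s r with hu
  have hs₀ := hs 0
  have hs₁ := hs 1
  have hs₂ := hs 2
  have hminor : 0 < 4 * s 0 * (4 * s 1) - u 2 ^ 2 := by
    have := sq_offDiagNum_lt hp
    rw [hu, div_pow, sub_pos, div_lt_iff₀ (by positivity)]
    linarith
  have hdet : 0 < 4 * s 0 * (4 * s 1) * (4 * s 2) + 2 * u 0 * u 1 * u 2
      - 4 * s 0 * u 0 ^ 2 - 4 * s 1 * u 1 ^ 2 - 4 * s 2 * u 2 ^ 2 := by
    refine lt_of_lt_of_eq (div_pos (mul_pos two_pos (offDiagNum_det_pos hs hp hne))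
      (by positivity : 0 < s 0 * s 1 * s 2)) ?_
    simp only [hu]
    field_simp
    ring
  have hε : ∀ᶠ ε in 𝓝[>] (0 : ℝ), 0 < ε ∧ 0 < 4 * s 0 * (4 * s 1) - (u 2 - ε) ^ 2 ∧
      0 < 4 * s 0 * (4 * s 1) * (4 * s 2) + 2 * (u 0 - ε) * (u 1 - ε) * (u 2 - ε)
        - 4 * s 0 * (u 0 - ε) ^ 2 - 4 * s 1 * (u 1 - ε) ^ 2 - 4 * s 2 * (u 2 - ε) ^ 2 ∧
      ∀ r, ε < ppoly s r / (2 * s r) :=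
    (eventually_mem_nhdsWithin (s := Set.Ioi 0)).and <|
      (eventually_pos_nhdsGT_zero (by fun_prop) (by simpa using hminor)).and <|
      (eventually_pos_nhdsGT_zero (by fun_prop) (by simpa using hdet)).and <|
      eventually_all.2 fun r =>
        nhdsWithin_le_nhds <| eventually_lt_nhds <| div_pos (hp r) (by linarith [hs r])
  obtain ⟨ε, hε₀, hε₂, hε₃, hεp⟩ := hε.exists
  refine ⟨fun r => a0 s r - ε, ?_, fun r => ?_, fun r => sub_lt_self _ hε₀⟩
  · rw [M6_a0_sub fun r => (hs r).ne']
    exact posDef_symm_fin_three_of_minors_pos (by positivity) hε₂ hε₃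
  · have := hεp r
    rw [ppoly_div_eq (hs r).ne'] at this
    linarith

lemma ppoly_pos_of_lt_a0 {a : Fin 3 → ℝ} {r : Fin 3} (hr : 0 < s r)
    (hlow : 0 < s (r + 1) + s (r + 2) - s r + a r) (hup : a r < a0 s r) : 0 < ppoly s r := by
  have : 0 < ppoly s r / (2 * s r) := by
    rw [ppoly_div_eq hr.ne']
    linarith
  exact (div_pos_iff_of_pos_right (by positivity)).mp this

lemma Spoly_div_const (t : ℝ) : Spoly (fun _ => t) / (2 * t) = 3 * t / 2 := by
  rcases eq_or_ne t 0 with rfl | ht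
  · simp
  · unfold Spoly
    field_simp
    ring

lemma a0_const (t : ℝ) (r : Fin 3) : a0 (fun _ => t) r = -(t / 2) := by
  rcases eq_or_ne t 0 with rfl | ht
  · simp [a0]
  · unfold a0
    field_simp
    ring

lemma not_posDef_M6_of_eq {a : Fin 3 → ℝ} (h₀₁ : s 0 = s 1) (h₁₂ : s 1 = s 2)
    (hup : ∀ r, a r < a0 s r) : ¬(M6 s a).PosDef := by
  intro hM
  have hq := hM.dotProduct_mulVec_pos (one_ne_zero : (1 : Fin 3 → ℝ) ≠ 0)
  obtain ⟨t, rfl⟩ : ∃ t, s = fun _ => t :=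
    ⟨s 0, funext fun r => by fin_cases r <;> simp [h₀₁, h₁₂]⟩
  rw [M6, dotProduct_mulVec_symm_fin_three, neg_div, Spoly_div_const] at hq
  simp only [a0_const] at hup
  simp only [Pi.one_apply, one_pow, mul_one] at hq
  linarith [hup 0, hup 1, hup 2]

end W6

/-- Matrix-level statement: `g_s` on `W⁶` has strongly positive curvature iff it has
`sec > 0`, i.e. `p_r(s) > 0` for all `r` and the `s_r` are not all equal. -/
theorem stronglyPos_W6_iff (s : Fin 3 → ℝ) (hs : ∀ r, 0 < s r) :
    ((∀ r, 0 < ppoly s r) ∧ ¬ (s 0 = s 1 ∧ s 1 = s 2)) ↔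
      ∃ a : Fin 3 → ℝ, (M6 s a).PosDef ∧
        (∀ r, 0 < s (r + 1) + s (r + 2) - s r + a r) ∧
        (∀ r, a r < a0 s r) := by
  refine ⟨fun ⟨hp, hne⟩ => exists_a_of_ppoly_pos hs hp hne, ?_⟩
  rintro ⟨a, hM, hlow, hup⟩
  exact ⟨fun r => ppoly_pos_of_lt_a0 (hs r) (hlow r) (hup r),
    fun ⟨h₀₁, h₁₂⟩ => not_posDef_M6_of_eq h₀₁ h₁₂ hup hM⟩
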